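/- arXiv:2307.02245 — 4 statements merged into one kernel-verified Lean document; each statement's English description precedes it below -/
import Mathlib

section
/- Let C ≥ 2 and let N, N' ≥ 1 be positive integers. For i = 1,…,N let a_i > 0, b_i ∈ ℝ and let q_i(x) ∈ ℝ^C be the vector whose first coordinate is a_i·x + b_i and whose remaining C−1 coordinates are fixed reals (independent of x). Similarly, for i = 1,…,N' let a'_i > 0, b'_i ∈ ℝ define q'_i(x) ∈ ℝ^C with first coordinate a'_i·x + b'_i and remaining coordinates fixed, and let n_i ∈ {2,…,C}. Then the function f(x) = −∑_{i=1}^N log(softmax(q_i(x)))_1 − ∑_{i=1}^{N'} log(softmax(q'_i(x)))_{n_i} is strictly convex on ℝ and admits a unique global minimizer. -/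
open Real

/-- softmax of a vector `v ∈ ℝ^d`: `softmax v j = exp (v j) / ∑ m, exp (v m)`. -/
noncomputable def softmax {d : ℕ} (v : Fin d → ℝ) : Fin d → ℝ :=
  fun j => Real.exp (v j) / ∑ m, Real.exp (v m)

lemma strictConvexOn_logexp {S : ℝ} (hS : 0 < S) :
    StrictConvexOn ℝ Set.univ (fun x => Real.log (Real.exp x + S)) := by
  have hpos : ∀ x : ℝ, 0 < Real.exp x + S := fun x => by positivity
  have hder : ∀ x : ℝ, HasDerivAt (fun x => Real.log (Real.exp x + S))
      (Real.exp x / (Real.exp x + S)) x := fun x => by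
    simpa using ((Real.hasDerivAt_exp x).add_const S).log (hpos x).ne'
  apply StrictMono.strictConvexOn_univ_of_deriv
  · exact (Real.continuous_exp.add continuous_const).log (fun x => (hpos x).ne')
  · have hd : deriv (fun x => Real.log (Real.exp x + S)) =
        fun x => Real.exp x / (Real.exp x + S) := funext fun x => (hder x).deriv
    rw [hd]
    intro x y hxy
    rw [div_lt_div_iff₀ (hpos x) (hpos y)]
    have := Real.exp_lt_exp.2 hxy
    nlinarith [Real.exp_pos x, Real.exp_pos y]

lemma convexOn_affine (c d : ℝ) : ConvexOn ℝ Set.univ (fun x : ℝ => c * x + d) := by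
  refine ⟨convex_univ, fun x _ y _ s t hs ht hst => le_of_eq ?_⟩
  simp only [smul_eq_mul]
  linear_combination (-d) * hst

lemma strictConvexOn_comp_affine {g : ℝ → ℝ} (hg : StrictConvexOn ℝ Set.univ g)
    {c : ℝ} (hc : c ≠ 0) (d : ℝ) :
    StrictConvexOn ℝ Set.univ (fun x => g (c * x + d)) := by
  refine ⟨convex_univ, fun x _ y _ hxy s t hs ht hst => ?_⟩
  have hne : c * x + d ≠ c * y + d := fun h => hxy (mul_left_cancel₀ hc (by linarith))
  have key := hg.2 (Set.mem_univ (c * x + d)) (Set.mem_univ (c * y + d)) hne hs ht hst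
  simp only [smul_eq_mul] at key ⊢
  have h2 : c * (s * x + t * y) + d = s * (c * x + d) + t * (c * y + d) := by
    linear_combination (-d) * hst
  rw [h2]; exact key

lemma term_strictConvexOn {c S : ℝ} (hc : 0 < c) (hS : 0 < S) (d e j : ℝ) :
    StrictConvexOn ℝ Set.univ
      (fun x : ℝ => Real.log (Real.exp (c * x + d) + S) + (e * x + j)) :=
  (strictConvexOn_comp_affine (strictConvexOn_logexp hS) hc.ne' d).add_convexOn
    (convexOn_affine e j)

lemma strictConvexOn_finset_sum {ι : Type*} {s : Finset ι} (hs : s.Nonempty)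
    {g : ι → ℝ → ℝ} (h : ∀ i ∈ s, StrictConvexOn ℝ Set.univ (g i)) :
    StrictConvexOn ℝ Set.univ (fun x => ∑ i ∈ s, g i x) := by
  induction hs using Finset.Nonempty.cons_induction with
  | singleton i => simpa using h i (by simp)
  | cons i s his hs ih =>
    simp only [Finset.sum_cons]
    exact (h i (by simp)).add (ih fun j hj => h j (Finset.mem_cons_of_mem hj))

lemma term_continuous {S : ℝ} (hS : 0 < S) (c d e j : ℝ) :
    Continuous (fun x : ℝ => Real.log (Real.exp (c * x + d) + S) + (e * x + j)) := by
  have h1 : Continuous (fun x : ℝ => Real.exp (c * x + d) + S) := by continuity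
  exact (h1.log fun x => by positivity).add (by continuity)


/-- The support-lemma function
`f(x) = −∑ᵢ log (softmax (qᵢ x))₁ − ∑ᵢ log (softmax (q'ᵢ x))_{nᵢ}`,
where each `qᵢ x` (resp. `q'ᵢ x`) has first coordinate `aᵢ x + bᵢ` (resp. `a'ᵢ x + b'ᵢ`)
with `aᵢ > 0` (resp. `a'ᵢ > 0`) and fixed remaining coordinates, and the `nᵢ` avoid the
first coordinate, is strictly convex and admits a unique global minimizer. -/
theorem supportLemma_strictConvex_unique_min {C N N' : ℕ}
    (hC : 2 ≤ C) (hN : 1 ≤ N) (hN' : 1 ≤ N')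
    (a : Fin N → ℝ) (ha : ∀ i, 0 < a i) (b : Fin N → ℝ)
    (r : Fin N → Fin C → ℝ)
    (a' : Fin N' → ℝ) (ha' : ∀ i, 0 < a' i) (b' : Fin N' → ℝ)
    (r' : Fin N' → Fin C → ℝ)
    (n : Fin N' → Fin C) (hn : ∀ i, n i ≠ (⟨0, by omega⟩ : Fin C))
    (q : Fin N → ℝ → Fin C → ℝ)
    (hq : ∀ i x, q i x = Function.update (r i) (⟨0, by omega⟩ : Fin C) (a i * x + b i))
    (q' : Fin N' → ℝ → Fin C → ℝ)
    (hq' : ∀ i x, q' i x = Function.update (r' i) (⟨0, by omega⟩ : Fin C) (a' i * x + b' i))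
    (f : ℝ → ℝ)
    (hf : ∀ x, f x =
      -(∑ i, Real.log (softmax (q i x) (⟨0, by omega⟩ : Fin C)))
      - ∑ i, Real.log (softmax (q' i x) (n i))) :
    StrictConvexOn ℝ Set.univ f ∧ ∃! x₀ : ℝ, ∀ x : ℝ, f x₀ ≤ f x := by
  set z0 : Fin C := ⟨0, by omega⟩ with hz0
  set S : Fin N → ℝ := fun i => ∑ m ∈ Finset.univ \ {z0}, Real.exp (r i m) with hSdef
  set S' : Fin N' → ℝ := fun i => ∑ m ∈ Finset.univ \ {z0}, Real.exp (r' i m) with hS'def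
  have hz1 : (⟨1, by omega⟩ : Fin C) ∈ Finset.univ \ {z0} := by
    simp [Finset.mem_sdiff, hz0, Fin.ext_iff]
  have hS : ∀ i, 0 < S i := fun i =>
    Finset.sum_pos (fun m _ => Real.exp_pos _) ⟨_, hz1⟩
  have hS' : ∀ i, 0 < S' i := fun i =>
    Finset.sum_pos (fun m _ => Real.exp_pos _) ⟨_, hz1⟩
  -- sums of exponentials
  have hsum : ∀ (i : Fin N) (x : ℝ),
      ∑ m, Real.exp (q i x m) = Real.exp (a i * x + b i) + S i := by
    intro i x
    rw [hq]
    have h : ∀ m, Real.exp (Function.update (r i) z0 (a i * x + b i) m)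
        = Function.update (fun k => Real.exp (r i k)) z0 (Real.exp (a i * x + b i)) m :=
      fun m => Function.apply_update (fun _ v => Real.exp v) (r i) z0 (a i * x + b i) m
    simp only [h]
    rw [Finset.sum_update_of_mem (Finset.mem_univ _)]
  have hsum' : ∀ (i : Fin N') (x : ℝ),
      ∑ m, Real.exp (q' i x m) = Real.exp (a' i * x + b' i) + S' i := by
    intro i x
    rw [hq']
    have h : ∀ m, Real.exp (Function.update (r' i) z0 (a' i * x + b' i) m)
        = Function.update (fun k => Real.exp (r' i k)) z0 (Real.exp (a' i * x + b' i)) m :=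
      fun m => Function.apply_update (fun _ v => Real.exp v) (r' i) z0 (a' i * x + b' i) m
    simp only [h]
    rw [Finset.sum_update_of_mem (Finset.mem_univ _)]
  -- rewrite f explicitly
  have hfF : ∀ x, f x =
      (∑ i, (Real.log (Real.exp (a i * x + b i) + S i) + (-(a i) * x + -(b i))))
      + ∑ i, (Real.log (Real.exp (a' i * x + b' i) + S' i) + ((0:ℝ) * x + -(r' i (n i)))) := by
    intro x
    rw [hf x]
    have h1 : ∀ i : Fin N, Real.log (softmax (q i x) z0)
        = (a i * x + b i) - Real.log (Real.exp (a i * x + b i) + S i) := by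
      intro i
      simp only [softmax, hsum i x]
      rw [hq, Function.update_self,
        Real.log_div (Real.exp_ne_zero _) (by positivity), Real.log_exp]
    have h2 : ∀ i : Fin N', Real.log (softmax (q' i x) (n i))
        = r' i (n i) - Real.log (Real.exp (a' i * x + b' i) + S' i) := by
      intro i
      simp only [softmax, hsum' i x]
      rw [hq', Function.update_of_ne (hn i),
        Real.log_div (Real.exp_ne_zero _) (by positivity), Real.log_exp]
    simp only [h1, h2]
    rw [← Finset.sum_neg_distrib, sub_eq_add_neg, ← Finset.sum_neg_distrib]
    congr 1 <;> exact Finset.sum_congr rfl fun i _ => by ring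
  -- strict convexity
  have hNuniv : (Finset.univ : Finset (Fin N)).Nonempty := ⟨⟨0, hN⟩, Finset.mem_univ _⟩
  have hN'univ : (Finset.univ : Finset (Fin N')).Nonempty := ⟨⟨0, hN'⟩, Finset.mem_univ _⟩
  have hfe : f = fun x =>
      (∑ i, (Real.log (Real.exp (a i * x + b i) + S i) + (-(a i) * x + -(b i))))
      + ∑ i, (Real.log (Real.exp (a' i * x + b' i) + S' i) + ((0:ℝ) * x + -(r' i (n i)))) :=
    funext hfF
  have hsc : StrictConvexOn ℝ Set.univ f := by
    rw [hfe]
    exact (strictConvexOn_finset_sum hNuniv fun i _ =>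
        term_strictConvexOn (ha i) (hS i) _ _ _).add
      (strictConvexOn_finset_sum hN'univ fun i _ =>
        term_strictConvexOn (ha' i) (hS' i) _ _ _)
  have hcont : Continuous f := by
    rw [hfe]
    exact (continuous_finset_sum _ fun i _ => term_continuous (hS i) _ _ _ _).add
      (continuous_finset_sum _ fun i _ => term_continuous (hS' i) _ _ _ _)
  -- coercivity at +∞
  have hlowtop : ∀ x : ℝ, (∑ i, a' i) * (id x) + (∑ i, (b' i - r' i (n i))) ≤ f x := by
    intro x
    rw [hfF x]
    have h1 : (0:ℝ) ≤ ∑ i, (Real.log (Real.exp (a i * x + b i) + S i) + (-(a i) * x + -(b i))) := by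
      apply Finset.sum_nonneg
      intro i _
      have : a i * x + b i ≤ Real.log (Real.exp (a i * x + b i) + S i) :=
        (Real.le_log_iff_exp_le (by positivity)).2 (by nlinarith [hS i])
      linarith
    have h2 : ∑ i, (a' i * x + (b' i - r' i (n i)))
        ≤ ∑ i, (Real.log (Real.exp (a' i * x + b' i) + S' i) + ((0:ℝ) * x + -(r' i (n i)))) := by
      apply Finset.sum_le_sum
      intro i _
      have : a' i * x + b' i ≤ Real.log (Real.exp (a' i * x + b' i) + S' i) :=
        (Real.le_log_iff_exp_le (by positivity)).2 (by nlinarith [hS' i])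
      linarith
    have h3 : (∑ i, a' i) * x + (∑ i, (b' i - r' i (n i)))
        = ∑ i, (a' i * x + (b' i - r' i (n i))) := by
      rw [Finset.sum_add_distrib, Finset.sum_mul]
    simp only [id]
    linarith
  -- coercivity at −∞
  have hlowbot : ∀ x : ℝ, (∑ i, a i) * (-x) + (∑ i, (Real.log (S i) - b i)
      + ∑ i, (Real.log (S' i) - r' i (n i))) ≤ f x := by
    intro x
    rw [hfF x]
    have h1 : ∑ i, (Real.log (S i) + (-(a i) * x + -(b i)))
        ≤ ∑ i, (Real.log (Real.exp (a i * x + b i) + S i) + (-(a i) * x + -(b i))) := by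
      apply Finset.sum_le_sum
      intro i _
      have : Real.log (S i) ≤ Real.log (Real.exp (a i * x + b i) + S i) := by
        apply Real.log_le_log (hS i)
        nlinarith [Real.exp_pos (a i * x + b i)]
      linarith
    have h2 : ∑ i, (Real.log (S' i) + ((0:ℝ) * x + -(r' i (n i))))
        ≤ ∑ i, (Real.log (Real.exp (a' i * x + b' i) + S' i) + ((0:ℝ) * x + -(r' i (n i)))) := by
      apply Finset.sum_le_sum
      intro i _
      have : Real.log (S' i) ≤ Real.log (Real.exp (a' i * x + b' i) + S' i) := by
        apply Real.log_le_log (hS' i)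
        nlinarith [Real.exp_pos (a' i * x + b' i)]
      linarith
    have h3 : (∑ i, a i) * (-x) + (∑ i, (Real.log (S i) - b i)
          + ∑ i, (Real.log (S' i) - r' i (n i)))
        = ∑ i, (Real.log (S i) + (-(a i) * x + -(b i)))
          + ∑ i, (Real.log (S' i) + ((0:ℝ) * x + -(r' i (n i)))) := by
      simp only [Finset.sum_add_distrib, Finset.sum_sub_distrib, neg_mul,
        Finset.sum_neg_distrib, ← Finset.sum_mul, zero_mul, Finset.sum_const_zero]
      ring
    linarith [h1, h2, le_of_eq h3]
  have hsa' : 0 < ∑ i, a' i := Finset.sum_pos (fun i _ => ha' i) hN'univ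
  have hsa : 0 < ∑ i, a i := Finset.sum_pos (fun i _ => ha i) hNuniv
  have htop : Filter.Tendsto f Filter.atTop Filter.atTop := by
    apply Filter.tendsto_atTop_mono hlowtop
    exact Filter.tendsto_atTop_add_const_right _ _
      (Filter.Tendsto.const_mul_atTop hsa' Filter.tendsto_id)
  have hbot : Filter.Tendsto f Filter.atBot Filter.atTop := by
    apply Filter.tendsto_atTop_mono hlowbot
    exact Filter.tendsto_atTop_add_const_right _ _
      ((Filter.Tendsto.const_mul_atTop hsa Filter.tendsto_id).comp Filter.tendsto_neg_atBot_atTop)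
  have hcoc : Filter.Tendsto f (Filter.cocompact ℝ) Filter.atTop := by
    rw [cocompact_eq_atBot_atTop]
    exact Filter.tendsto_sup.2 ⟨hbot, htop⟩
  obtain ⟨x₀, hx₀⟩ := hcont.exists_forall_le hcoc
  refine ⟨hsc, x₀, hx₀, fun y hy => ?_⟩
  exact hsc.eq_of_isMinOn (isMinOn_univ_iff.2 hy) (isMinOn_univ_iff.2 hx₀)
    (Set.mem_univ _) (Set.mem_univ _)
end

section
/- Fix integers C and k with 1 ≤ k and k + 1 ≤ C, and fix a pair of indices (i, j) ∈ {1,…,C}². For every matrix F ∈ ℝ^{C×C}, the function t ↦ R_hard(F^{(t)}), where F^{(t)} agrees with F in all entries except that its (i,j) entry equals t, is convex on ℝ and admits a unique global minimizer. -/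
/-!
Along the line `t ↦ F⁽ᵗ⁾` every logit vector `2 F_p + ∑_{ℓ ∈ S} F_ℓ` moves only in coordinate
`j`, with speed `a = 2 [p = i] + [i ∈ S] ≥ 0`. Hence each summand `-log softmax (v + a t e_j)_p`
equals `log (exp (v_j + a t) + D) - (v + a t e_j)_p` with `D > 0`: convex, and strictly convex
when `a > 0`. Every class `p` has a bag `S ∈ 𝕐_p` with `a > 0` (take `p = i`, or `i ∈ S`, which
needs `k ≥ 1`), and the summand of such a bag is at least `(v + a t e_j)_q - (v + a t e_j)_p` for
every `q`, so it tends to `+∞` as `t → +∞` when `p ≠ j` and as `t → -∞` when `p = j`. The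
summands being nonnegative, the risk is strictly convex and tends to `+∞` at both ends, so it has
exactly one minimizer.
-/

open Real

/-- The hard OKO risk: `R_hard(F) = −∑ᵢ ∑_{S ∈ 𝕐ᵢ} log (softmax (2Fᵢ + ∑_{ℓ∈S} F_ℓ))ᵢ`,
where `𝕐ᵢ` is the family of `k`-element subsets of `{1,…,C}` avoiding `i`. -/
noncomputable def Rhard {C : ℕ} (k : ℕ) (F : Fin C → Fin C → ℝ) : ℝ :=
  -∑ i : Fin C,
    ∑ S ∈ Finset.univ.filter (fun S : Finset (Fin C) => S.card = k ∧ i ∉ S),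
      Real.log (softmax (fun j => 2 * F i j + ∑ ℓ ∈ S, F ℓ j) i)

open Filter Finset

section FinsetSums

variable {𝕜 E ι β : Type*} {t : Finset ι} {f : ι → E → β}

lemma convexOn_finset_sum [Semiring 𝕜] [PartialOrder 𝕜] [AddCommMonoid E] [SMul 𝕜 E]
    [AddCommMonoid β] [PartialOrder β] [IsOrderedAddMonoid β] [Module 𝕜 β]
    {s : Set E} (hs : Convex 𝕜 s) (hf : ∀ x ∈ t, ConvexOn 𝕜 s (f x)) :
    ConvexOn 𝕜 s (fun y => ∑ x ∈ t, f x y) := by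
  simpa only [← Finset.sum_apply] using
    sum_induction f (ConvexOn 𝕜 s) (fun _ _ => ConvexOn.add) (convexOn_const (0 : β) hs : _) hf

lemma strictConvexOn_finset_sum_s4 [Semiring 𝕜] [PartialOrder 𝕜] [AddCommMonoid E] [SMul 𝕜 E]
    [AddCommMonoid β] [PartialOrder β] [IsOrderedCancelAddMonoid β] [Module 𝕜 β]
    [DecidableEq ι] {s : Set E} {a : ι} (ha : a ∈ t) (hfa : StrictConvexOn 𝕜 s (f a))
    (hf : ∀ x ∈ t, ConvexOn 𝕜 s (f x)) :
    StrictConvexOn 𝕜 s (fun y => ∑ x ∈ t, f x y) := by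
  simp only [← add_sum_erase t _ ha]
  exact hfa.add_convexOn (convexOn_finset_sum hfa.1 fun x hx => hf x (mem_of_mem_erase hx))

lemma tendsto_finset_sum_atTop_of_nonneg [AddCommMonoid β] [PartialOrder β]
    [IsOrderedAddMonoid β] {l : Filter E} (hf : ∀ x ∈ t, ∀ y, 0 ≤ f x y) {a : ι} (ha : a ∈ t)
    (hfa : Tendsto (f a) l atTop) : Tendsto (fun y => ∑ x ∈ t, f x y) l atTop :=
  tendsto_atTop_mono (fun y => single_le_sum (fun x hx => hf x hx y) ha) hfa

end FinsetSums

lemma StrictConvexOn.existsUnique_forall_le {g : ℝ → ℝ} (hg : StrictConvexOn ℝ Set.univ g)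
    (htop : Tendsto g atTop atTop) (hbot : Tendsto g atBot atTop) :
    ∃! t₀, ∀ t, g t₀ ≤ g t := by
  have hcont : Continuous g := continuousOn_univ.mp (hg.convexOn.continuousOn isOpen_univ)
  obtain ⟨t₀, ht₀⟩ := hcont.exists_forall_le <| by
    rw [cocompact_eq_atBot_atTop]
    exact tendsto_sup.2 ⟨hbot, htop⟩
  exact ⟨t₀, ht₀, fun t ht => hg.eq_of_isMinOn (isMinOn_univ_iff.2 ht)
    (isMinOn_univ_iff.2 ht₀) trivial trivial⟩

lemma StrictConvexOn.comp_add_mul {f : ℝ → ℝ} (hf : StrictConvexOn ℝ Set.univ f) (b : ℝ)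
    {a : ℝ} (ha : a ≠ 0) : StrictConvexOn ℝ Set.univ (fun t => f (b + a * t)) := by
  refine ⟨convex_univ, fun x _ y _ hxy α β hα hβ hαβ => ?_⟩
  have key := hf.2 (Set.mem_univ (b + a * x)) (Set.mem_univ (b + a * y))
    (by simpa [ha] using hxy) hα hβ hαβ
  convert key using 2
  simp only [smul_eq_mul]
  linear_combination b * hαβ.symm

lemma strictConvexOn_log_exp_add {D : ℝ} (hD : 0 < D) :
    StrictConvexOn ℝ Set.univ (fun s => log (exp s + D)) := by
  have hderiv : deriv (fun s => log (exp s + D)) = fun s => 1 - D / (exp s + D) := by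
    funext s
    rw [(((hasDerivAt_exp s).add_const D).log (by positivity)).deriv]
    field_simp
    ring
  refine StrictMonoOn.strictConvexOn_of_deriv convex_univ
    ((continuous_exp.add continuous_const).log fun s => (add_pos (exp_pos s) hD).ne').continuousOn
    ?_
  rw [hderiv]
  intro x _ y _ hxy
  have := exp_lt_exp.2 hxy
  dsimp only
  gcongr

lemma log_softmax {d : ℕ} (v : Fin d → ℝ) (p : Fin d) :
    log (softmax v p) = v p - log (∑ m, exp (v m)) := by
  have hpos : 0 < ∑ m, exp (v m) := sum_pos (fun m _ => exp_pos _) ⟨p, mem_univ p⟩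
  rw [softmax, log_div (exp_ne_zero _) hpos.ne', log_exp]

lemma sub_le_neg_log_softmax {d : ℕ} (v : Fin d → ℝ) (p q : Fin d) :
    v q - v p ≤ -log (softmax v p) := by
  rw [log_softmax, neg_sub]
  gcongr
  rw [le_log_iff_exp_le (sum_pos (fun m _ => exp_pos _) ⟨p, mem_univ p⟩)]
  exact single_le_sum (fun m _ => (exp_pos _).le) (mem_univ q)

lemma neg_log_softmax_nonneg {d : ℕ} (v : Fin d → ℝ) (p : Fin d) : 0 ≤ -log (softmax v p) := by
  simpa using sub_le_neg_log_softmax v p p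

section Line

variable {d : ℕ} (v : Fin d → ℝ) {j : Fin d} {a : ℝ}

lemma neg_log_softmax_add_single (p : Fin d) (s : ℝ) :
    -log (softmax (v + Pi.single j s) p)
      = log (exp (v j + s) + ∑ m ∈ univ.erase j, exp (v m))
        - (v p + (Pi.single j s : Fin d → ℝ) p) := by
  rw [log_softmax, neg_sub, ← add_sum_erase _ _ (mem_univ j)]
  congr 3
  · simp
  · refine sum_congr rfl fun m hm => ?_
    simp [Pi.single_eq_of_ne (ne_of_mem_erase hm)]

lemma strictConvexOn_neg_log_softmax_add_single (p : Fin d) (hd : 1 < d) (ha : a ≠ 0) :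
    StrictConvexOn ℝ Set.univ (fun t => -log (softmax (v + Pi.single j (a * t)) p)) := by
  have hD : 0 < ∑ m ∈ univ.erase j, exp (v m) := by
    refine sum_pos (fun m _ => exp_pos _) ?_
    rw [← card_pos, card_erase_of_mem (mem_univ j), card_univ, Fintype.card_fin]
    omega
  have haff : ConcaveOn ℝ Set.univ (fun t => v p + (Pi.single j (a * t) : Fin d → ℝ) p) := by
    rcases eq_or_ne p j with rfl | hpj
    · simp only [Pi.single_eq_same]
      exact (concaveOn_const (v p) convex_univ).add
        ((LinearMap.mulLeft ℝ a).concaveOn convex_univ)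
    · simpa [hpj] using concaveOn_const (v p) convex_univ
  simp only [neg_log_softmax_add_single]
  exact ((strictConvexOn_log_exp_add hD).comp_add_mul (v j) ha).sub_concaveOn haff

lemma convexOn_neg_log_softmax_add_single (p : Fin d) (hd : 1 < d) :
    ConvexOn ℝ Set.univ (fun t => -log (softmax (v + Pi.single j (a * t)) p)) := by
  rcases eq_or_ne a 0 with rfl | ha
  · simpa using convexOn_const (-log (softmax v p)) convex_univ
  · exact (strictConvexOn_neg_log_softmax_add_single v p hd ha).convexOn

lemma tendsto_neg_log_softmax_add_single_atTop {p : Fin d} (hpj : p ≠ j) (ha : 0 < a) :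
    Tendsto (fun t => -log (softmax (v + Pi.single j (a * t)) p)) atTop atTop := by
  refine tendsto_atTop_mono (fun t => sub_le_neg_log_softmax _ p j) ?_
  simp only [Pi.add_apply, Pi.single_eq_same, Pi.single_eq_of_ne hpj, add_zero]
  convert tendsto_atTop_add_const_left _ (v j - v p) (tendsto_id.const_mul_atTop ha) using 2
  simp only [id]
  ring

lemma tendsto_neg_log_softmax_add_single_atBot {q : Fin d} (hqj : q ≠ j) (ha : 0 < a) :
    Tendsto (fun t => -log (softmax (v + Pi.single j (a * t)) j)) atBot atTop := by
  refine tendsto_atTop_mono (fun t => sub_le_neg_log_softmax _ j q) ?_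
  simp only [Pi.add_apply, Pi.single_eq_same, Pi.single_eq_of_ne hqj, add_zero]
  convert tendsto_atTop_add_const_left _ (v q - v j)
    (tendsto_neg_atBot_atTop.const_mul_atTop ha) using 2
  ring

end Line

section OKO

variable {C : ℕ}

def okoSets (k : ℕ) (p : Fin C) : Finset (Finset (Fin C)) :=
  univ.filter fun S => S.card = k ∧ p ∉ S

def okoLogits (F : Fin C → Fin C → ℝ) (p : Fin C) (S : Finset (Fin C)) : Fin C → ℝ :=
  fun m => 2 * F p m + ∑ ℓ ∈ S, F ℓ m

lemma Rhard_eq_sum_sigma (k : ℕ) (F : Fin C → Fin C → ℝ) :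
    Rhard k F = ∑ x ∈ univ.sigma (okoSets k), -log (softmax (okoLogits F x.1 x.2) x.1) := by
  rw [Rhard, sum_sigma, ← sum_neg_distrib]
  simp only [← sum_neg_distrib]
  rfl

def rowMultiplicity (i p : Fin C) (S : Finset (Fin C)) : ℝ :=
  (if p = i then 2 else 0) + if i ∈ S then 1 else 0

lemma rowMultiplicity_pos {i p : Fin C} {S : Finset (Fin C)} (h : p = i ∨ i ∈ S) :
    0 < rowMultiplicity i p S := by
  unfold rowMultiplicity
  rcases h with h | h <;> split_ifs <;> norm_num

lemma okoLogits_update (F : Fin C → Fin C → ℝ) (i j p : Fin C) (S : Finset (Fin C)) (t : ℝ) :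
    okoLogits (fun a b => if a = i ∧ b = j then t else F a b) p S
      = okoLogits (fun a b => if a = i ∧ b = j then 0 else F a b) p S
        + Pi.single j (rowMultiplicity i p S * t) := by
  funext m
  rcases eq_or_ne m j with rfl | hm
  · have hsum : ∑ ℓ ∈ S, (if ℓ = i then t else F ℓ m)
        = (∑ ℓ ∈ S, if ℓ = i then 0 else F ℓ m) + if i ∈ S then t else 0 := by
      rw [← sum_ite_eq' S i (fun _ => t), ← sum_add_distrib]
      exact sum_congr rfl fun ℓ _ => by split_ifs <;> ring
    simp only [okoLogits, and_true, Pi.add_apply, Pi.single_eq_same, rowMultiplicity, hsum]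
    split_ifs <;> ring
  · simp [okoLogits, hm]

lemma exists_mem_okoSets {k : ℕ} (hk : 1 ≤ k) (hkC : k + 1 ≤ C) (i p : Fin C) :
    ∃ S ∈ okoSets k p, p = i ∨ i ∈ S := by
  obtain ⟨S, hTS, hS, hcard⟩ := exists_subsuperset_card_eq (s := ({i} : Finset (Fin C)).erase p)
    (t := univ.erase p) (n := k) (erase_subset_erase p (subset_univ _))
    ((card_erase_le).trans (by simpa using hk)) (by simpa using Nat.le_sub_one_of_lt hkC)
  refine ⟨S, mem_filter.2 ⟨mem_univ _, hcard, fun h => (mem_erase.1 (hS h)).1 rfl⟩, ?_⟩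
  by_cases hpi : p = i
  · exact .inl hpi
  · exact .inr (hTS (mem_erase.2 ⟨Ne.symm hpi, mem_singleton_self i⟩))

end OKO

/-- For fixed indices `(i, j)`, the hard OKO risk, viewed as a function of the single
entry `F_{i,j}` (all other entries fixed), is convex and admits a unique global
minimizer. -/
theorem Rhard_coordinate_convex_unique_min {C k : ℕ} (hk : 1 ≤ k) (hkC : k + 1 ≤ C)
    (i j : Fin C) (F : Fin C → Fin C → ℝ) :
    ConvexOn ℝ Set.univ
        (fun t : ℝ => Rhard k (fun a b => if a = i ∧ b = j then t else F a b))
      ∧ ∃! t₀ : ℝ, ∀ t : ℝ,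
          Rhard k (fun a b => if a = i ∧ b = j then t₀ else F a b)
            ≤ Rhard k (fun a b => if a = i ∧ b = j then t else F a b) := by
  let f : (Σ _ : Fin C, Finset (Fin C)) → ℝ → ℝ := fun x t =>
    -log (softmax (okoLogits (fun a b => if a = i ∧ b = j then 0 else F a b) x.1 x.2
      + Pi.single j (rowMultiplicity i x.1 x.2 * t)) x.1)
  have hRhard (t : ℝ) : Rhard k (fun a b => if a = i ∧ b = j then t else F a b)
      = ∑ x ∈ univ.sigma (okoSets k), f x t := by
    rw [Rhard_eq_sum_sigma]
    exact sum_congr rfl fun x _ => by rw [okoLogits_update]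
  have hC : 1 < C := by omega
  have hconv : ∀ x ∈ univ.sigma (okoSets k), ConvexOn ℝ Set.univ (f x) := fun x _ =>
    convexOn_neg_log_softmax_add_single _ _ hC
  obtain ⟨q, hqj⟩ := Fintype.exists_ne_of_one_lt_card (by simpa using hC) j
  obtain ⟨Sj, hSj, hj⟩ := exists_mem_okoSets hk hkC i j
  obtain ⟨Sq, hSq, hq⟩ := exists_mem_okoSets hk hkC i q
  have hmemj : ⟨j, Sj⟩ ∈ univ.sigma (okoSets k) := mem_sigma.2 ⟨mem_univ j, hSj⟩
  have hmemq : ⟨q, Sq⟩ ∈ univ.sigma (okoSets k) := mem_sigma.2 ⟨mem_univ q, hSq⟩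
  have hstrict : StrictConvexOn ℝ Set.univ (fun t => ∑ x ∈ univ.sigma (okoSets k), f x t) :=
    strictConvexOn_finset_sum_s4 hmemj
      (strictConvexOn_neg_log_softmax_add_single _ _ hC (rowMultiplicity_pos hj).ne') hconv
  have hnonneg : ∀ x ∈ univ.sigma (okoSets k), ∀ t, 0 ≤ f x t := fun x _ _ =>
    neg_log_softmax_nonneg _ _
  simp only [hRhard]
  exact ⟨hstrict.convexOn, hstrict.existsUnique_forall_le
    (tendsto_finset_sum_atTop_of_nonneg hnonneg hmemq
      (tendsto_neg_log_softmax_add_single_atTop _ hqj (rowMultiplicity_pos hq)))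
    (tendsto_finset_sum_atTop_of_nonneg hnonneg hmemj
      (tendsto_neg_log_softmax_add_single_atBot _ hqj (rowMultiplicity_pos hj)))⟩
end

section
/- Fix integers C and k with 1 ≤ k and k + 1 ≤ C. For all a, b ∈ ℝ, the gradient of R_hard at F(a,b) again lies in the symmetric family 𝓕: that is, ∂R_hard/∂F_{i,i}(F(a,b)) takes the same value for all i ∈ {1,…,C}, and ∂R_hard/∂F_{i,j}(F(a,b)) takes the same value for all pairs i ≠ j. -/
open Real

/-- The partial derivative of `Rhard` with respect to the entry `F_{i,j}`,
evaluated at `F`. -/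
noncomputable def RhardPartial {C : ℕ} (k : ℕ) (i j : Fin C)
    (F : Fin C → Fin C → ℝ) : ℝ :=
  deriv (fun t : ℝ => Rhard k (fun a b => if a = i ∧ b = j then t else F a b)) (F i j)

lemma softmax_perm {C : ℕ} (σ : Equiv.Perm (Fin C)) (v : Fin C → ℝ) (i : Fin C) :
    softmax (fun j => v (σ j)) i = softmax v (σ i) := by
  unfold softmax
  rw [Equiv.sum_comp σ (fun m => Real.exp (v m))]

lemma Rhard_perm {C k : ℕ} (σ : Equiv.Perm (Fin C)) (F : Fin C → Fin C → ℝ) :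
    Rhard k (fun p q => F (σ p) (σ q)) = Rhard k F := by
  unfold Rhard
  congr 1
  rw [← Equiv.sum_comp σ (fun i => ∑ S ∈ Finset.univ.filter
      (fun S : Finset (Fin C) => S.card = k ∧ i ∉ S),
      Real.log (softmax (fun j => 2 * F i j + ∑ ℓ ∈ S, F ℓ j) i))]
  refine Finset.sum_congr rfl fun i _ => ?_
  refine Finset.sum_nbij' (fun S => S.map σ.toEmbedding)
    (fun S => S.map σ.symm.toEmbedding) ?_ ?_ ?_ ?_ ?_
  · intro S hS
    simp only [Finset.mem_filter, Finset.mem_univ, true_and] at hS ⊢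
    constructor
    · rw [Finset.card_map]; exact hS.1
    · simp only [Finset.mem_map, Equiv.coe_toEmbedding]
      rintro ⟨x, hx, hxe⟩
      exact hS.2 (by rwa [σ.injective hxe] at hx)
  · intro S hS
    simp only [Finset.mem_filter, Finset.mem_univ, true_and] at hS ⊢
    constructor
    · rw [Finset.card_map]; exact hS.1
    · simp only [Finset.mem_map, Equiv.coe_toEmbedding]
      rintro ⟨x, hx, hxe⟩
      apply hS.2
      have hxi : σ i = x := by rw [← hxe, Equiv.apply_symm_apply]
      rwa [hxi]
  · intro S _
    ext x
    simp [Finset.mem_map]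
  · intro S _
    ext x
    simp [Finset.mem_map]
  · intro S _
    congr 1
    unfold softmax
    rw [← Equiv.sum_comp σ (fun m => Real.exp
      (2 * F (σ i) m + ∑ ℓ' ∈ Finset.map σ.toEmbedding S, F ℓ' m))]
    simp [Finset.sum_map]

lemma RhardPartial_perm {C k : ℕ} (σ : Equiv.Perm (Fin C)) (i j : Fin C)
    (F : Fin C → Fin C → ℝ) (hF : ∀ p q, F (σ p) (σ q) = F p q) :
    RhardPartial k (σ i) (σ j) F = RhardPartial k i j F := by
  unfold RhardPartial
  rw [hF i j]
  congr 1
  funext t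
  rw [← Rhard_perm σ (fun a b => if a = σ i ∧ b = σ j then t else F a b)]
  congr 1
  funext p q
  simp [σ.injective.eq_iff, hF]

/-- At any symmetric matrix `F(a,b)` (diagonal entries `a`, off-diagonal entries `b`),
the gradient of the hard OKO risk again lies in the symmetric family: all diagonal
partial derivatives agree, and all off-diagonal partial derivatives agree. -/
theorem Rhard_grad_symmetric {C k : ℕ} (hk : 1 ≤ k) (hkC : k + 1 ≤ C) (a b : ℝ) :
    (∀ i i' : Fin C,
        RhardPartial k i i (fun p q : Fin C => if p = q then a else b)
          = RhardPartial k i' i' (fun p q : Fin C => if p = q then a else b))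
      ∧ (∀ i j i' j' : Fin C, i ≠ j → i' ≠ j' →
          RhardPartial k i j (fun p q : Fin C => if p = q then a else b)
            = RhardPartial k i' j' (fun p q : Fin C => if p = q then a else b)) := by
  have hsym : ∀ σ : Equiv.Perm (Fin C), ∀ p q : Fin C,
      (if σ p = σ q then a else b) = (if p = q then a else b) := by
    intro σ p q
    simp [σ.injective.eq_iff]
  constructor
  · intro i i'
    have h := RhardPartial_perm (k := k) (Equiv.swap i i') i i
      (fun p q : Fin C => if p = q then a else b) (hsym _)
    rw [Equiv.swap_apply_left] at h
    exact h.symm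
  · intro i j i' j' hij hij'
    set σ1 := Equiv.swap i i' with hσ1
    set σ2 := Equiv.swap (σ1 j) j' with hσ2
    set σ := σ1.trans σ2 with hσ
    have hji' : σ1 j ≠ i' := by
      intro h
      apply hij
      have : σ1 j = σ1 i := by rw [h, hσ1, Equiv.swap_apply_left]
      exact (σ1.injective this).symm
    have hσi : σ i = i' := by
      simp only [hσ, Equiv.trans_apply, hσ1, Equiv.swap_apply_left]
      rw [hσ2]
      exact Equiv.swap_apply_of_ne_of_ne (Ne.symm hji') hij'
    have hσj : σ j = j' := by
      simp only [hσ, Equiv.trans_apply, hσ2, Equiv.swap_apply_left]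
    have h := RhardPartial_perm (k := k) σ i j
      (fun p q : Fin C => if p = q then a else b) (hsym _)
    rw [hσi, hσj] at h
    exact h.symm
end

section
/- Let C ≥ 2, let ŷ ∈ ℝ^C be a probability vector with 0 < ŷ_j < 1 for all j, and let y ∈ {1,…,C} be any class label. Then H(e_y, ŷ) − H(ŷ) ≥ (1 − ŷ_y)·(log((1 − ŷ_y)/(C − 1)) − log(ŷ_y)). -/
open Real

/-- Cross-entropy `H(p, q) = −∑ⱼ pⱼ log qⱼ`. -/
noncomputable def crossEntropy {C : ℕ} (p q : Fin C → ℝ) : ℝ :=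
  -∑ j, p j * Real.log (q j)

/-- Entropy `H(q) = −∑ⱼ qⱼ log qⱼ`. -/
noncomputable def entropy {C : ℕ} (q : Fin C → ℝ) : ℝ :=
  -∑ j, q j * Real.log (q j)

/-- Max-entropy lower bound on the excess confidence:
`H(e_y, ŷ) − H(ŷ) ≥ (1 − ŷ_y)·(log((1 − ŷ_y)/(C − 1)) − log ŷ_y)`. -/
theorem relCrossEntropy_lower_bound {C : ℕ} (hC : 2 ≤ C)
    (yhat : Fin C → ℝ) (hpos : ∀ j, 0 < yhat j) (hlt : ∀ j, yhat j < 1)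
    (hsum : ∑ j, yhat j = 1) (y : Fin C) :
    (1 - yhat y) * (Real.log ((1 - yhat y) / ((C : ℝ) - 1)) - Real.log (yhat y))
      ≤ crossEntropy (Pi.single y 1) yhat - entropy yhat := by
  classical
  set S : Finset (Fin C) := Finset.univ.erase y with hS
  have hcard : (S.card : ℝ) = (C : ℝ) - 1 := by
    have : S.card = C - 1 := by
      simp [hS, Finset.card_erase_of_mem]
    rw [this]
    have : (1:ℕ) ≤ C := by omega
    push_cast [Nat.cast_sub this]
    ring
  have hn : (0:ℝ) < (C : ℝ) - 1 := by
    have : (2:ℝ) ≤ (C:ℝ) := by exact_mod_cast hC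
    linarith
  have hsplit : ∑ j ∈ S, yhat j = 1 - yhat y := by
    have := Finset.add_sum_erase Finset.univ yhat (Finset.mem_univ y)
    rw [hsum] at this
    linarith [this]
  -- Jensen's inequality
  have hw : ∑ _j ∈ S, (1 / ((C:ℝ) - 1)) = 1 := by
    rw [Finset.sum_const, nsmul_eq_mul, hcard]
    field_simp
  have jensen := (Real.convexOn_mul_log).map_sum_le
    (t := S) (w := fun _ => 1 / ((C:ℝ) - 1)) (p := yhat)
    (fun i _ => by positivity) hw (fun i _ => (hpos i).le)
  have havg : ∑ i ∈ S, (1 / ((C:ℝ) - 1)) • yhat i = (1 - yhat y) / ((C:ℝ) - 1) := by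
    rw [← Finset.smul_sum, hsplit, smul_eq_mul]
    ring
  rw [havg] at jensen
  have key : (1 - yhat y) * Real.log ((1 - yhat y) / ((C:ℝ) - 1))
      ≤ ∑ j ∈ S, yhat j * Real.log (yhat j) := by
    have := mul_le_mul_of_nonneg_left jensen hn.le
    calc (1 - yhat y) * Real.log ((1 - yhat y) / ((C:ℝ) - 1))
        = ((C:ℝ) - 1) * ((1 - yhat y) / ((C:ℝ) - 1) * Real.log ((1 - yhat y) / ((C:ℝ) - 1))) := by
          field_simp
      _ ≤ ((C:ℝ) - 1) * ∑ i ∈ S, (1 / ((C:ℝ) - 1)) • (yhat i * Real.log (yhat i)) := this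
      _ = ∑ j ∈ S, yhat j * Real.log (yhat j) := by
          simp only [smul_eq_mul, ← Finset.mul_sum]
          field_simp
  have hce : crossEntropy (Pi.single y 1) yhat = - Real.log (yhat y) := by
    unfold crossEntropy
    congr 1
    rw [Finset.sum_eq_single y]
    · simp
    · intro b _ hb; simp [Pi.single_apply, hb]
    · simp
  have hent : entropy yhat = -(yhat y * Real.log (yhat y) + ∑ j ∈ S, yhat j * Real.log (yhat j)) := by
    unfold entropy
    congr 1
    exact (Finset.add_sum_erase Finset.univ (fun j => yhat j * Real.log (yhat j))
      (Finset.mem_univ y)).symm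
  rw [hce, hent]
  nlinarith [key]
end
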